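/- arXiv:1708.07757 — 9 statements merged into one kernel-verified Lean document; each statement's English description precedes it below -/
import Mathlib

section
/- Let n ≥ 2 and a > 0, and let c be the uniform-node matrix c_{ij} = 1/(n−1) for i ≠ j and c_{ii} = 0. If real numbers ρ¹,…,ρⁿ and q¹,…,qⁿ satisfy, for every i, (a/√(2π))·ρⁱ + (1/2)·qⁱ = ∑_{j=1}^n c_{ij} ((a/√(2π))·ρʲ − (1/2)·qʲ), then for all i, j one has a·ρⁱ + (√(2π)/2)·((n−2)/n)·qⁱ = a·ρʲ + (√(2π)/2)·((n−2)/n)·qʲ; that is, the quantity ρ + (√(2π)/(2a))·((n−2)/n)·q is invariant across the edges at the node. -/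
/-- Maxwell coupling at a uniform node: invariance of
ρ + (√(2π)/(2a))·((n−2)/n)·q across edges. -/
theorem maxwell_coupling_uniform_invariant (n : ℕ) (hn : 2 ≤ n) (a : ℝ) (ha : 0 < a)
    (c : Fin n → Fin n → ℝ)
    (hc : ∀ i j, c i j = if i = j then 0 else 1 / ((n : ℝ) - 1))
    (ρ q : Fin n → ℝ)
    (h : ∀ i, (a / Real.sqrt (2 * Real.pi)) * ρ i + (1 / 2) * q i =
      ∑ j, c i j * ((a / Real.sqrt (2 * Real.pi)) * ρ j - (1 / 2) * q j)) :
    ∀ i j, a * ρ i + (Real.sqrt (2 * Real.pi) / 2) * (((n : ℝ) - 2) / n) * q i =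
           a * ρ j + (Real.sqrt (2 * Real.pi) / 2) * (((n : ℝ) - 2) / n) * q j := by
  set s := Real.sqrt (2 * Real.pi) with hsdef
  have hs : 0 < s := Real.sqrt_pos.mpr (by positivity)
  have hn1 : (1:ℝ) ≤ (n:ℝ) - 1 := by
    have : (2:ℝ) ≤ (n:ℝ) := by exact_mod_cast hn
    linarith
  have hn1' : ((n:ℝ) - 1) ≠ 0 := by linarith
  have hn0 : (n:ℝ) ≠ 0 := by
    have : (2:ℝ) ≤ (n:ℝ) := by exact_mod_cast hn
    linarith
  set f : Fin n → ℝ := fun j => (a / s) * ρ j + (-(1 / 2)) * q j with hf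
  set S : ℝ := ∑ j, ((a / s) * ρ j - (1 / 2) * q j) with hS
  have key : ∀ i, a * ρ i + (s / 2) * (((n : ℝ) - 2) / n) * q i = (s / n) * S := by
    intro i
    have hi := h i
    have hsum : ∑ j, c i j * ((a / s) * ρ j - (1 / 2) * q j)
        = (1 / ((n:ℝ) - 1)) * (S - ((a / s) * ρ i - (1 / 2) * q i)) := by
      have : ∀ j, c i j * ((a / s) * ρ j - (1 / 2) * q j)
          = (1 / ((n:ℝ) - 1)) * ((a / s) * ρ j - (1 / 2) * q j)
            - (if j = i then (1 / ((n:ℝ) - 1)) * ((a / s) * ρ j - (1 / 2) * q j) else 0) := by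
        intro j
        rw [hc]
        by_cases hji : i = j
        · subst hji; simp
        · rw [if_neg hji, if_neg (fun hh => hji hh.symm)]; ring
      rw [Finset.sum_congr rfl (fun j _ => this j), Finset.sum_sub_distrib,
        Finset.sum_ite_eq' Finset.univ i
          (fun j => (1 / ((n:ℝ) - 1)) * ((a / s) * ρ j - (1 / 2) * q j))]
      simp only [Finset.mem_univ, if_true]
      simp only [hS, mul_sub, Finset.mul_sum, Finset.sum_sub_distrib]
    rw [hsum] at hi
    have hs' : s ≠ 0 := ne_of_gt hs
    field_simp at hi ⊢
    nlinarith [hi, sq_nonneg s, hs]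
  intro i j
  rw [key i, key j]
end

section
/- Let n ≥ 2 and let c be the uniform-node matrix c_{ij} = 1/(n−1) for i ≠ j and c_{ii} = 0. If real numbers ρ¹,…,ρⁿ and q¹,…,qⁿ satisfy, for every i, (1/4)·ρⁱ + (1/2)·qⁱ = ∑_{j=1}^n c_{ij} ((1/4)·ρʲ − (1/2)·qʲ), then for all i, j one has ρⁱ + (2(n−2)/n)·qⁱ = ρʲ + (2(n−2)/n)·qʲ. -/
/-- Maxwell coupling at a uniform node for the bounded-velocity BGK model:
invariance of ρ + (2(n−2)/n)·q across edges. -/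
theorem maxwell_coupling_bounded_uniform_invariant (n : ℕ) (hn : 2 ≤ n)
    (c : Fin n → Fin n → ℝ)
    (hc : ∀ i j, c i j = if i = j then 0 else 1 / ((n : ℝ) - 1))
    (ρ q : Fin n → ℝ)
    (h : ∀ i, (1 / 4) * ρ i + (1 / 2) * q i =
      ∑ j, c i j * ((1 / 4) * ρ j - (1 / 2) * q j)) :
    ∀ i j, ρ i + (2 * ((n : ℝ) - 2) / n) * q i =
           ρ j + (2 * ((n : ℝ) - 2) / n) * q j := by
  have hn2 : (2 : ℝ) ≤ (n : ℝ) := by exact_mod_cast hn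
  have hn1 : (n : ℝ) - 1 ≠ 0 := by linarith
  have hn0 : (n : ℝ) ≠ 0 := by linarith
  set S : ℝ := ∑ j, ((1 / 4) * ρ j - (1 / 2) * q j) with hS
  have key : ∀ i, ρ i + (2 * ((n : ℝ) - 2) / n) * q i = (4 / n) * S := by
    intro i
    have hi := h i
    have e : ∀ j, c i j * ((1 / 4) * ρ j - (1 / 2) * q j)
        = (1 / ((n : ℝ) - 1)) * ((1 / 4) * ρ j - (1 / 2) * q j)
          - (if i = j then (1 / ((n : ℝ) - 1)) * ((1 / 4) * ρ j - (1 / 2) * q j) else 0) := by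
      intro j
      rw [hc]
      split <;> ring
    rw [Finset.sum_congr rfl (fun j _ => e j), Finset.sum_sub_distrib,
      Finset.sum_ite_eq, if_pos (Finset.mem_univ i), ← Finset.mul_sum, ← hS] at hi
    have hi2 : ((n:ℝ) - 1) * ((1/4) * ρ i + (1/2) * q i)
        = S - ((1/4) * ρ i - (1/2) * q i) := by
      rw [hi]; field_simp
    field_simp
    linear_combination 4 * hi2
  intro i j
  rw [key i, key j]
end

section
/- Let n ≥ 2 and let c be the uniform-node matrix c_{ij} = 1/(n−1) for i ≠ j and c_{ii} = 0. If real numbers ρ¹,…,ρⁿ and q¹,…,qⁿ satisfy, for every i, ρⁱ + (3/2)·qⁱ = ∑_{j=1}^n c_{ij} (ρʲ − (3/2)·qʲ), then ∑_{i=1}^n qⁱ = 0 and for all i, j one has ρⁱ + (3(n−2)/(2n))·qⁱ = ρʲ + (3(n−2)/(2n))·qʲ. -/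
/-- Full-moment coupling at a uniform node (bounded velocities):
flux conservation and invariance of ρ + (3(n−2)/(2n))·q. -/
theorem fullmoment_coupling_bounded_uniform (n : ℕ) (hn : 2 ≤ n)
    (c : Fin n → Fin n → ℝ)
    (hc : ∀ i j, c i j = if i = j then 0 else 1 / ((n : ℝ) - 1))
    (ρ q : Fin n → ℝ)
    (h : ∀ i, ρ i + (3 / 2) * q i = ∑ j, c i j * (ρ j - (3 / 2) * q j)) :
    (∑ i, q i = 0) ∧
    ∀ i j, ρ i + (3 * ((n : ℝ) - 2) / (2 * n)) * q i =
           ρ j + (3 * ((n : ℝ) - 2) / (2 * n)) * q j := by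
  have hn2 : (2 : ℝ) ≤ (n : ℝ) := by exact_mod_cast hn
  have hn1 : (n : ℝ) - 1 ≠ 0 := by linarith
  have hn0 : (n : ℝ) ≠ 0 := by linarith
  set S : ℝ := ∑ j, (ρ j - (3 / 2) * q j) with hS
  have key : ∀ i, (n : ℝ) * ρ i + (3 / 2) * ((n : ℝ) - 2) * q i = S := by
    intro i
    have hsum : ∑ j, c i j * (ρ j - (3 / 2) * q j)
        = (S - (ρ i - (3 / 2) * q i)) / ((n : ℝ) - 1) := by
      have : ∀ j, c i j * (ρ j - (3 / 2) * q j)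
          = 1 / ((n : ℝ) - 1) * (ρ j - (3 / 2) * q j)
            - (if i = j then 1 / ((n : ℝ) - 1) * (ρ j - (3 / 2) * q j) else 0) := by
        intro j
        rw [hc]
        by_cases hij : i = j <;> simp [hij]
      rw [Finset.sum_congr rfl fun j _ => this j, Finset.sum_sub_distrib,
        Finset.sum_ite_eq Finset.univ i
          (fun j => 1 / ((n : ℝ) - 1) * (ρ j - (3 / 2) * q j))]
      simp [← Finset.mul_sum, ← hS]
      field_simp
    have h' := h i
    rw [hsum] at h'
    field_simp at h'
    linarith
  have hsumkey : (n : ℝ) * (∑ i, ρ i) + (3 / 2) * ((n : ℝ) - 2) * (∑ i, q i)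
      = (n : ℝ) * S := by
    have := Finset.sum_congr rfl (fun i (_ : i ∈ Finset.univ) => key i)
    simpa [Finset.sum_add_distrib, Finset.mul_sum, Finset.sum_const,
      Finset.card_univ, mul_comm, mul_left_comm, Finset.sum_mul] using this
  have hSval : S = ∑ i, ρ i - (3 / 2) * ∑ i, q i := by
    simp [hS, Finset.sum_sub_distrib, Finset.mul_sum]
  have hq : ∑ i, q i = 0 := by
    rw [hSval] at hsumkey
    have : ((n : ℝ) - 1) * (∑ i, q i) = 0 := by nlinarith [hsumkey]
    rcases mul_eq_zero.mp this with h0 | h0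
    · exact absurd h0 hn1
    · exact h0
  refine ⟨hq, fun i j => ?_⟩
  have hi := key i
  have hj := key j
  have e : ∀ k, ρ k + (3 * ((n : ℝ) - 2) / (2 * n)) * q k
      = ((n : ℝ) * ρ k + (3 / 2) * ((n : ℝ) - 2) * q k) / n := by
    intro k; field_simp
  have hi' : ρ i + (3 * ((n : ℝ) - 2) / (2 * n)) * q i = S / n := by
    rw [e, hi]
  have hj' : ρ j + (3 * ((n : ℝ) - 2) / (2 * n)) * q j = S / n := by
    rw [e, hj]
  rw [hi', hj']
end

section
/- Let n ≥ 2, a > 0, and let c be the uniform-node matrix c_{ij} = 1/(n−1) for i ≠ j and c_{ii} = 0. If real numbers ρ¹,…,ρⁿ and q¹,…,qⁿ satisfy, for every i, ρⁱ + (√2/(a√π))·qⁱ = ∑_{j=1}^n c_{ij} (ρʲ − (√2/(a√π))·qʲ), then ∑_{i=1}^n qⁱ = 0 and for all i, j one has ρⁱ + (√2/(a√π))·((n−2)/n)·qⁱ = ρʲ + (√2/(a√π))·((n−2)/n)·qʲ. -/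
/-!
Write `u = ρ + K q` and `v = ρ - K q` (outgoing and incoming half-moments, `K = √2/(a√π)`).
At a uniform node `u i = (∑ v - v i)/(n - 1)`, i.e. `(n - 1) u i + v i = ∑ v` for every edge.
Summing over the edges gives `∑ u = ∑ v`, which is `2 K ∑ q = 0`; and `(n - 1) u i + v i`,
which equals `n ρ i + (n - 2) K q i`, does not depend on `i`.
-/

open Finset

noncomputable section

variable {ι : Type*} [Fintype ι] [DecidableEq ι]

variable (ι) in
def uniformNode (i j : ι) : ℝ :=
  if i = j then 0 else 1 / ((Fintype.card ι : ℝ) - 1)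

theorem sum_uniformNode_mul (i : ι) (v : ι → ℝ) :
    ∑ j, uniformNode ι i j * v j = (∑ j, v j - v i) / ((Fintype.card ι : ℝ) - 1) := by
  have hsplit : ∀ j, uniformNode ι i j * v j
      = v j / ((Fintype.card ι : ℝ) - 1)
        - if i = j then v j / ((Fintype.card ι : ℝ) - 1) else 0 := by
    intro j
    by_cases hij : i = j <;> simp [uniformNode, hij, div_eq_inv_mul]
  simp only [hsplit, sum_sub_distrib, sum_ite_eq, mem_univ, if_true, ← sum_div, sub_div]

theorem card_sub_one_mul_add_eq_sum (hn : 1 < Fintype.card ι) {u v : ι → ℝ}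
    (h : ∀ i, u i = ∑ j, uniformNode ι i j * v j) (i : ι) :
    ((Fintype.card ι : ℝ) - 1) * u i + v i = ∑ j, v j := by
  have hn' : (Fintype.card ι : ℝ) - 1 ≠ 0 := sub_ne_zero.mpr (by exact_mod_cast hn.ne')
  rw [h i, sum_uniformNode_mul, mul_div_cancel₀ _ hn']
  ring

theorem sum_eq_sum_of_uniformNode (hn : 1 < Fintype.card ι) {u v : ι → ℝ}
    (h : ∀ i, u i = ∑ j, uniformNode ι i j * v j) :
    ∑ i, u i = ∑ i, v i := by
  have hn' : (Fintype.card ι : ℝ) - 1 ≠ 0 := sub_ne_zero.mpr (by exact_mod_cast hn.ne')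
  have hsum := sum_congr rfl fun i (_ : i ∈ univ) => card_sub_one_mul_add_eq_sum hn h i
  rw [sum_add_distrib, ← mul_sum, sum_const, card_univ, nsmul_eq_mul] at hsum
  exact mul_left_cancel₀ hn' (by linarith)

end

/-- Full-moment coupling at a uniform node (unbounded velocities):
flux conservation and invariance of ρ + (√2/(a√π))·((n−2)/n)·q. -/
theorem fullmoment_coupling_unbounded_uniform (n : ℕ) (hn : 2 ≤ n) (a : ℝ) (ha : 0 < a)
    (c : Fin n → Fin n → ℝ)
    (hc : ∀ i j, c i j = if i = j then 0 else 1 / ((n : ℝ) - 1))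
    (ρ q : Fin n → ℝ)
    (h : ∀ i, ρ i + (Real.sqrt 2 / (a * Real.sqrt Real.pi)) * q i =
      ∑ j, c i j * (ρ j - (Real.sqrt 2 / (a * Real.sqrt Real.pi)) * q j)) :
    (∑ i, q i = 0) ∧
    ∀ i j, ρ i + (Real.sqrt 2 / (a * Real.sqrt Real.pi)) * (((n : ℝ) - 2) / n) * q i =
           ρ j + (Real.sqrt 2 / (a * Real.sqrt Real.pi)) * (((n : ℝ) - 2) / n) * q j := by
  set K := Real.sqrt 2 / (a * Real.sqrt Real.pi)
  have hK : K ≠ 0 := by positivity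
  have hcard : 1 < Fintype.card (Fin n) := by rw [Fintype.card_fin]; omega
  have hn0 : (n : ℝ) ≠ 0 := by positivity
  have hnode : ∀ i, ρ i + K * q i = ∑ j, uniformNode (Fin n) i j * (ρ j - K * q j) := by
    simpa [hc, uniformNode] using h
  have hflux := sum_eq_sum_of_uniformNode hcard hnode
  have hinv : ∀ i, ρ i + K * (((n : ℝ) - 2) / n) * q i = (∑ j, (ρ j - K * q j)) / n := by
    intro i
    have := card_sub_one_mul_add_eq_sum hcard hnode i
    rw [Fintype.card_fin] at this
    field_simp
    linear_combination this
  refine ⟨?_, fun i j => (hinv i).trans (hinv j).symm⟩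
  rw [sum_add_distrib, sum_sub_distrib, ← mul_sum] at hflux
  exact (mul_eq_zero.mp (by linarith : K * ∑ i, q i = 0)).resolve_left hK
end

section
/- Let a = 1/√3 and let γ, C₁, C₂ be real constants. Define on ℝ the functions ρ̂(x) = γ·e^{−2x/a} + (3/2)C₁, q̂(x) = (a/2)·γ·e^{−2x/a} + (3/2)C₂, q(x) = C₁, and ρ(x) = 3a·γ·e^{−2x/a} + 3C₂. Then these functions solve the half-moment half-space system: q' = 0, (−(1/6)ρ + q̂)' = 0, q̂' = −(ρ̂ − (3/2)q), and (−(1/6)ρ̂ + q)' = −(q̂ − ρ/2). Moreover ρ(x) → 3C₂ and q̂(x) → (3/2)C₂ as x → ∞. -/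
/-! Each function is an affine function of the single decaying mode `exp (-2 x / a)`, so the four
equations reduce to identities between coefficients; only the last one, the balance
`γ / (3 a) = a γ`, uses `a² = 1 / 3`. -/

open Real Filter Topology

lemma hasDerivAt_mul_exp_div_add (a b c d x : ℝ) :
    HasDerivAt (fun y => c * exp (b * y / a) + d) (c * (b / a) * exp (b * x / a)) x := by
  have hlin : HasDerivAt (fun y => b * y / a) (b / a) x := by
    simpa using ((hasDerivAt_id x).const_mul b).div_const a
  exact ((hlin.exp.const_mul c).add_const d).congr_deriv (by ring)

lemma tendsto_mul_exp_div_add_atTop {a b : ℝ} (h : b / a < 0) (c d : ℝ) :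
    Tendsto (fun x => c * exp (b * x / a) + d) atTop (𝓝 d) := by
  have hlin : Tendsto (fun x => b * x / a) atTop atBot := by
    simpa only [mul_div_right_comm, id] using tendsto_id.const_mul_atTop_of_neg h
  simpa using ((tendsto_exp_atBot.comp hlin).const_mul c).add_const d

/-- The displayed exponential functions solve the half-moment half-space system
for a = 1/√3, with the stated limits at infinity. -/
theorem halfmoment_halfspace_explicit_solution (γ C₁ C₂ a : ℝ)
    (ha : a = 1 / Real.sqrt 3)
    (ρh qh q ρ : ℝ → ℝ)
    (hρh : ρh = fun x => γ * Real.exp (-2 * x / a) + (3 / 2) * C₁)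
    (hqh : qh = fun x => (a / 2) * γ * Real.exp (-2 * x / a) + (3 / 2) * C₂)
    (hq : q = fun _ => C₁)
    (hρ : ρ = fun x => 3 * a * γ * Real.exp (-2 * x / a) + 3 * C₂) :
    (∀ x, deriv q x = 0) ∧
    (∀ x, deriv (fun y => -(1 / 6) * ρ y + qh y) x = 0) ∧
    (∀ x, deriv qh x = -(ρh x - (3 / 2) * q x)) ∧
    (∀ x, deriv (fun y => -(1 / 6) * ρh y + q y) x = -(qh x - ρ x / 2)) ∧
    Filter.Tendsto ρ Filter.atTop (nhds (3 * C₂)) ∧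
    Filter.Tendsto qh Filter.atTop (nhds ((3 / 2) * C₂)) := by
  have ha_pos : 0 < a := by rw [ha]; positivity
  have ha_sq : 3 * a ^ 2 = 1 := by rw [ha, div_pow, sq_sqrt (by norm_num)]; norm_num
  have hdecay : -2 / a < 0 := div_neg_of_neg_of_pos (by norm_num) ha_pos
  subst hρh hqh hq hρ
  refine ⟨fun x => deriv_const x C₁, fun x => ?_, fun x => ?_, fun x => ?_,
    tendsto_mul_exp_div_add_atTop hdecay _ _, tendsto_mul_exp_div_add_atTop hdecay _ _⟩
  · refine (((hasDerivAt_mul_exp_div_add a (-2) _ _ x).const_mul _).add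
      (hasDerivAt_mul_exp_div_add a (-2) _ _ x)).deriv.trans ?_
    field_simp
    ring
  · refine (hasDerivAt_mul_exp_div_add a (-2) _ _ x).deriv.trans ?_
    field_simp
    ring
  · refine (((hasDerivAt_mul_exp_div_add a (-2) _ _ x).const_mul _).add_const C₁).deriv.trans ?_
    field_simp
    linear_combination (-4 * γ * exp (-(2 * x / a))) * ha_sq
end

section
/- Let n ≥ 2, a > 0, and let c be the uniform-node matrix c_{ij} = 1/(n−1) for i ≠ j and c_{ii} = 0. If real numbers ρ¹,…,ρⁿ, q¹,…,qⁿ, γ¹,…,γⁿ satisfy, for every i, (1/2)qⁱ + (1/4)ρⁱ + (a/4)γⁱ = ∑_{j=1}^n c_{ij} (−(1/2)qʲ + (1/4)ρʲ + (a/4)γʲ), then for all i, j one has ρⁱ + (2(n−2)/n)·qⁱ + a·γⁱ = ρʲ + (2(n−2)/n)·qʲ + a·γʲ. -/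
/-! Write `G i = q/2 + ρ/4 + aγ/4` and `F i = -q/2 + ρ/4 + aγ/4` for the fluxes entering and
leaving the node along edge `i`. The coupling says `G i` is the mean of the `F j` over the other
`n - 1` edges, so `(n - 1) G i + F i = ∑ j, F j` for every `i`; the left side is `n / 4` times
`ρ i + (2(n-2)/n) q i + a γ i`. -/

open Finset

theorem Finset.sum_ite_eq_zero_mul {ι R : Type*} [Fintype ι] [DecidableEq ι] [CommRing R]
    (k : R) (x : ι → R) (i : ι) :
    ∑ j, (if i = j then 0 else k) * x j = k * (∑ j, x j - x i) := by
  calc ∑ j, (if i = j then 0 else k) * x j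
      = ∑ j, (k * x j - if i = j then k * x j else 0) :=
        sum_congr rfl fun j _ => by split_ifs <;> ring
    _ = k * (∑ j, x j - x i) := by
        rw [sum_sub_distrib, sum_ite_eq, if_pos (mem_univ i), mul_sub, mul_sum]

theorem mul_add_eq_sum_of_eq_uniform_average {ι K : Type*} [Fintype ι] [DecidableEq ι] [Field K]
    {m : K} (hm : m ≠ 0) {F G : ι → K}
    (h : ∀ i, G i = ∑ j, (if i = j then 0 else 1 / m) * F j) (i : ι) :
    m * G i + F i = ∑ j, F j := by
  rw [h i, sum_ite_eq_zero_mul, ← mul_assoc, mul_one_div_cancel hm, one_mul, sub_add_cancel]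

theorem halfmoment_coupling_uniform_invariant_general (n : ℕ) (hn : 2 ≤ n) (a : ℝ)
    (c : Fin n → Fin n → ℝ)
    (hc : ∀ i j, c i j = if i = j then 0 else 1 / ((n : ℝ) - 1))
    (ρ q γ : Fin n → ℝ)
    (h : ∀ i, (1 / 2) * q i + (1 / 4) * ρ i + (a / 4) * γ i =
      ∑ j, c i j * (-(1 / 2) * q j + (1 / 4) * ρ j + (a / 4) * γ j)) :
    ∀ i j, ρ i + (2 * ((n : ℝ) - 2) / n) * q i + a * γ i =
           ρ j + (2 * ((n : ℝ) - 2) / n) * q j + a * γ j := by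
  have hn' : (2 : ℝ) ≤ n := by exact_mod_cast hn
  have hflux := mul_add_eq_sum_of_eq_uniform_average (sub_ne_zero.mpr (by linarith : (n : ℝ) ≠ 1))
    (G := fun i => (1 / 2) * q i + (1 / 4) * ρ i + (a / 4) * γ i)
    (fun i => (h i).trans (sum_congr rfl fun j _ => by rw [hc]))
  beta_reduce at hflux
  have invariant_eq : ∀ i, ρ i + (2 * ((n : ℝ) - 2) / n) * q i + a * γ i =
      4 / n * ∑ j, (-(1 / 2) * q j + (1 / 4) * ρ j + (a / 4) * γ j) := by
    intro i
    have hn0 : (n : ℝ) ≠ 0 := by positivity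
    rw [← hflux i]
    field_simp
    ring
  intro i j
  rw [invariant_eq i, invariant_eq j]

/-- Half-moment flux coupling at a uniform node: invariance of
ρ + (2(n−2)/n)·q + a·γ across edges. -/
theorem halfmoment_coupling_uniform_invariant (n : ℕ) (hn : 2 ≤ n) (a : ℝ) (ha : 0 < a)
    (c : Fin n → Fin n → ℝ)
    (hc : ∀ i j, c i j = if i = j then 0 else 1 / ((n : ℝ) - 1))
    (ρ q γ : Fin n → ℝ)
    (h : ∀ i, (1 / 2) * q i + (1 / 4) * ρ i + (a / 4) * γ i =
      ∑ j, c i j * (-(1 / 2) * q j + (1 / 4) * ρ j + (a / 4) * γ j)) :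
    ∀ i j, ρ i + (2 * ((n : ℝ) - 2) / n) * q i + a * γ i =
           ρ j + (2 * ((n : ℝ) - 2) / n) * q j + a * γ j :=
  halfmoment_coupling_uniform_invariant_general n hn a c hc ρ q γ h
end

section
/- Let n ≥ 2, a > 0, and let c be the uniform-node matrix c_{ij} = 1/(n−1) for i ≠ j and c_{ii} = 0. Suppose real numbers ρ¹,…,ρⁿ, q¹,…,qⁿ, γ¹,…,γⁿ satisfy, for every i, both coupling equations: (1/2)qⁱ + (1/4)ρⁱ + (a/4)γⁱ = ∑_{j=1}^n c_{ij} (−(1/2)qʲ + (1/4)ρʲ + (a/4)γʲ) and (3/4)qⁱ + (1/2)ρⁱ + ((3a+1)/2)γⁱ = ∑_{j=1}^n c_{ij} (−(3/4)qʲ + (1/2)ρʲ + ((3a−1)/2)γʲ). Then for all i, j one has ρⁱ + κ·qⁱ = ρʲ + κ·qʲ, where κ = ((n−2)/n)·(9a + 4(n−2)/n)/(4a + 2(n−2)/n). -/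
/-- Half-moment coupling at a uniform node (bounded velocities): after eliminating
the layer amplitudes the quantity ρ + κ·q is invariant across edges. -/
theorem halfmoment_coupling_bounded_invariant (n : ℕ) (hn : 2 ≤ n) (a : ℝ) (ha : 0 < a)
    (c : Fin n → Fin n → ℝ)
    (hc : ∀ i j, c i j = if i = j then 0 else 1 / ((n : ℝ) - 1))
    (ρ q γ : Fin n → ℝ)
    (h1 : ∀ i, (1 / 2) * q i + (1 / 4) * ρ i + (a / 4) * γ i =
      ∑ j, c i j * (-(1 / 2) * q j + (1 / 4) * ρ j + (a / 4) * γ j))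
    (h2 : ∀ i, (3 / 4) * q i + (1 / 2) * ρ i + ((3 * a + 1) / 2) * γ i =
      ∑ j, c i j * (-(3 / 4) * q j + (1 / 2) * ρ j + ((3 * a - 1) / 2) * γ j))
    (κ : ℝ)
    (hκ : κ = (((n : ℝ) - 2) / n) *
      (9 * a + 4 * (((n : ℝ) - 2) / n)) / (4 * a + 2 * (((n : ℝ) - 2) / n))) :
    ∀ i j, ρ i + κ * q i = ρ j + κ * q j := by
  have hn2 : (2 : ℝ) ≤ (n : ℝ) := by exact_mod_cast hn
  have hn0 : (n : ℝ) ≠ 0 := by linarith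
  have hn1 : (n : ℝ) - 1 ≠ 0 := by linarith
  set nR : ℝ := (n : ℝ) with hnR
  -- key sum lemma
  have key : ∀ (i : Fin n) (F : Fin n → ℝ),
      ∑ j, c i j * F j = ((∑ j, F j) - F i) / (nR - 1) := by
    intro i F
    have h : ∀ j, c i j * F j = F j / (nR - 1) - (if i = j then F j / (nR - 1) else 0) := by
      intro j
      rw [hc]
      split <;> simp_all <;> ring
    simp only [h, Finset.sum_sub_distrib, Finset.sum_ite_eq, Finset.mem_univ, if_true]
    rw [sub_div, Finset.sum_div]
  set Sρ : ℝ := ∑ j, ρ j with hSρ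
  set Sq : ℝ := ∑ j, q j with hSq
  set Sγ : ℝ := ∑ j, γ j with hSγ
  set D : ℝ := 4 * a * nR ^ 2 + 2 * nR * (nR - 2) with hD
  set N : ℝ := 9 * a * nR * (nR - 2) + 4 * (nR - 2) ^ 2 with hN
  have hDpos : 0 < D := by
    have h1 : 0 < 4 * a * nR ^ 2 := by positivity
    nlinarith
  have hDne : D ≠ 0 := ne_of_gt hDpos
  have hd2 : 4 * a * nR + 2 * (nR - 2) ≠ 0 := by
    have h0 : 0 < a * nR := mul_pos ha (by linarith)
    nlinarith
  have hκD : κ * D = N := by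
    have hden : 4 * a + 2 * ((nR - 2) / nR) = (4 * a * nR + 2 * (nR - 2)) / nR := by
      field_simp
    rw [hκ, hD, hN, hden, div_div_eq_mul_div, div_mul_eq_mul_div, div_eq_iff hd2]
    field_simp
  -- the main per-edge identity
  have keyi : ∀ i, D * ρ i + N * q i =
      2 * (3 * a * nR + nR - 2) * (Sρ + a * Sγ - 2 * Sq)
        - a * nR * (2 * Sρ + 2 * (3 * a - 1) * Sγ - 3 * Sq) := by
    intro i
    have e1 := h1 i
    have e2 := h2 i
    rw [key i] at e1
    rw [key i] at e2
    have s1 : (∑ j, (-(1 / 2) * q j + (1 / 4) * ρ j + (a / 4) * γ j))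
        = -(1 / 2) * Sq + (1 / 4) * Sρ + (a / 4) * Sγ := by
      rw [hSq, hSρ, hSγ]
      simp [Finset.sum_add_distrib, Finset.mul_sum]
    have s2 : (∑ j, (-(3 / 4) * q j + (1 / 2) * ρ j + ((3 * a - 1) / 2) * γ j))
        = -(3 / 4) * Sq + (1 / 2) * Sρ + ((3 * a - 1) / 2) * Sγ := by
      rw [hSq, hSρ, hSγ]
      simp [Finset.sum_add_distrib, Finset.mul_sum]
    rw [s1, eq_div_iff hn1] at e1
    rw [s2, eq_div_iff hn1] at e2
    rw [hD, hN]
    linear_combination (8 * (3 * a * nR + nR - 2)) * e1 - (4 * a * nR) * e2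
  intro i j
  have h := keyi i
  have h' := keyi j
  have : D * (ρ i + κ * q i) = D * (ρ j + κ * q j) := by
    linear_combination h - h' + (q i - q j) * hκD
  exact mul_left_cancel₀ hDne this
end

section
/- Let a > 0 and let M(v) = exp(−v²/(2a²))/√(2πa²) be the Gaussian with variance a². For real constants α, β let f(v) = (α + β v)·M(v), and set ρ⁺ = ∫₀^∞ f(v) dv and q⁺ = ∫₀^∞ v f(v) dv. Then ρ⁺ = α/2 + (a/√(2π))·β, q⁺ = (a/√(2π))·α + (a²/2)·β, and ∫₀^∞ v² f(v) dv = ((π − 4)·a²·ρ⁺ + a·√(2π)·q⁺)/(π − 2). -/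
/-!
Write `M v = exp (-b v²) / √(2π a²)` with `b = 1 / (2a²)`. Then
`∫₀^∞ vⁿ f = (α mₙ + β mₙ₊₁) / √(2π a²)` in terms of the half-line Gaussian moments
`mₙ = ∫₀^∞ vⁿ exp (-b v²) dv`, which are `m₀ = √(π/b) / 2`, `m₁ = 1 / (2b)` and, integrating
`d/dv (vⁿ⁺¹ exp (-b v²))` over `(0, ∞)`, `mₙ₊₂ = (n + 1) / (2b) · mₙ`. The closure coefficients
`x, y` solve `m₂ = x m₀ + y m₁`, `m₃ = x m₁ + y m₂`, a system of determinant
`m₀ m₂ - m₁² = (π - 2) / (8b²)`.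
-/

open Real MeasureTheory Set Filter Topology

variable {b : ℝ}

theorem integrableOn_Ioi_pow_mul_exp_neg_mul_sq (hb : 0 < b) (n : ℕ) :
    IntegrableOn (fun v : ℝ => v ^ n * exp (-b * v ^ 2)) (Ioi 0) := by
  simpa using integrableOn_rpow_mul_exp_neg_mul_sq hb (s := n)
    (by linarith [n.cast_nonneg (α := ℝ)])

theorem tendsto_pow_mul_exp_neg_mul_sq_atTop (hb : 0 < b) (n : ℕ) :
    Tendsto (fun v : ℝ => v ^ n * exp (-b * v ^ 2)) atTop (𝓝 0) := by
  have h := rpow_mul_exp_neg_mul_sq_isLittleO_exp_neg hb n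
  simp only [rpow_natCast] at h
  refine h.tendsto_zero_of_tendsto (tendsto_exp_atBot.comp ?_)
  exact tendsto_id.const_mul_atTop_of_neg (by norm_num)

theorem hasDerivAt_pow_succ_mul_exp_neg_mul_sq (b : ℝ) (n : ℕ) (v : ℝ) :
    HasDerivAt (fun v : ℝ => v ^ (n + 1) * exp (-b * v ^ 2))
      ((n + 1) * (v ^ n * exp (-b * v ^ 2)) - 2 * b * (v ^ (n + 2) * exp (-b * v ^ 2))) v := by
  refine ((hasDerivAt_pow (n + 1) v).mul
    ((hasDerivAt_pow 2 v).const_mul (-b)).exp).congr_deriv ?_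
  push_cast
  ring

noncomputable def halfGaussianMoment (b : ℝ) (n : ℕ) : ℝ :=
  ∫ v in Ioi 0, v ^ n * exp (-b * v ^ 2)

namespace halfGaussianMoment

theorem zero (b : ℝ) : halfGaussianMoment b 0 = √(π / b) / 2 := by
  simpa [halfGaussianMoment] using integral_gaussian_Ioi b

theorem one (hb : 0 < b) : halfGaussianMoment b 1 = (2 * b)⁻¹ := by
  have h := integral_mul_cexp_neg_mul_sq (b := (b : ℂ)) (by simpa)
  simp_rw [← Complex.ofReal_pow, ← Complex.ofReal_neg, ← Complex.ofReal_mul,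
    ← Complex.ofReal_exp, ← Complex.ofReal_mul, integral_complex_ofReal] at h
  simp_rw [halfGaussianMoment, pow_one]
  exact_mod_cast h

theorem add_two (hb : 0 < b) (n : ℕ) :
    halfGaussianMoment b (n + 2) = (n + 1) / (2 * b) * halfGaussianMoment b n := by
  have hint := ((integrableOn_Ioi_pow_mul_exp_neg_mul_sq hb n).const_mul (n + 1)).sub
    ((integrableOn_Ioi_pow_mul_exp_neg_mul_sq hb (n + 2)).const_mul (2 * b))
  have h := integral_Ioi_of_hasDerivAt_of_tendsto'
    (fun v _ => hasDerivAt_pow_succ_mul_exp_neg_mul_sq b n v) hint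
    (tendsto_pow_mul_exp_neg_mul_sq_atTop hb (n + 1))
  rw [integral_sub ((integrableOn_Ioi_pow_mul_exp_neg_mul_sq hb n).const_mul _)
    ((integrableOn_Ioi_pow_mul_exp_neg_mul_sq hb (n + 2)).const_mul _),
    integral_const_mul, integral_const_mul] at h
  change (n + 1) * halfGaussianMoment b n - 2 * b * halfGaussianMoment b (n + 2)
    = 0 - 0 ^ (n + 1) * exp (-b * 0 ^ 2) at h
  rw [zero_pow n.succ_ne_zero, zero_mul, sub_zero] at h
  field_simp
  linarith

theorem two (hb : 0 < b) : halfGaussianMoment b 2 = √(π / b) / (4 * b) := by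
  rw [add_two hb 0, zero]
  field_simp
  ring

theorem three (hb : 0 < b) : halfGaussianMoment b 3 = (2 * b ^ 2)⁻¹ := by
  rw [add_two hb 1, one hb]
  field_simp
  ring

theorem integral_pow_mul_affine_mul_exp_div (hb : 0 < b) (n : ℕ) (α β c : ℝ) :
    ∫ v in Ioi 0, v ^ n * ((α + β * v) * (exp (-b * v ^ 2) / c)) =
      (α * halfGaussianMoment b n + β * halfGaussianMoment b (n + 1)) / c := by
  have hsplit : ∀ v : ℝ, v ^ n * ((α + β * v) * (exp (-b * v ^ 2) / c)) =
      α / c * (v ^ n * exp (-b * v ^ 2)) + β / c * (v ^ (n + 1) * exp (-b * v ^ 2)) := by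
    intro v
    ring
  simp_rw [hsplit]
  rw [integral_add ((integrableOn_Ioi_pow_mul_exp_neg_mul_sq hb n).const_mul _)
    ((integrableOn_Ioi_pow_mul_exp_neg_mul_sq hb (n + 1)).const_mul _),
    integral_const_mul, integral_const_mul, halfGaussianMoment, halfGaussianMoment]
  ring

end halfGaussianMoment

/-- Half-moment closure identity for the Gaussian BGK model with unbounded
velocity space. -/
theorem halfmoment_closure_gaussian (a : ℝ) (ha : 0 < a) (α β : ℝ)
    (M : ℝ → ℝ)
    (hM : M = fun v => Real.exp (-v ^ 2 / (2 * a ^ 2)) / Real.sqrt (2 * Real.pi * a ^ 2))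
    (f : ℝ → ℝ) (hf : f = fun v => (α + β * v) * M v)
    (ρp qp : ℝ)
    (hρp : ρp = ∫ v in Set.Ioi (0:ℝ), f v)
    (hqp : qp = ∫ v in Set.Ioi (0:ℝ), v * f v) :
    ρp = α / 2 + (a / Real.sqrt (2 * Real.pi)) * β ∧
    qp = (a / Real.sqrt (2 * Real.pi)) * α + (a ^ 2 / 2) * β ∧
    (∫ v in Set.Ioi (0:ℝ), v ^ 2 * f v) =
      ((Real.pi - 4) * a ^ 2 * ρp + a * Real.sqrt (2 * Real.pi) * qp) /
        (Real.pi - 2) := by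
  set b : ℝ := (2 * a ^ 2)⁻¹ with hb_def
  have hb : 0 < b := by positivity
  have hnorm : √(2 * π * a ^ 2) = a * √(2 * π) := by
    rw [sqrt_mul' _ (sq_nonneg a), sqrt_sq ha.le, mul_comm]
  have hroot : √(π / b) = a * √(2 * π) := by
    rw [← hnorm, hb_def, div_inv_eq_mul]
    ring_nf
  have hmom : ∀ n : ℕ, ∫ v in Ioi 0, v ^ n * f v =
      (α * halfGaussianMoment b n + β * halfGaussianMoment b (n + 1)) / (a * √(2 * π)) := by
    intro n
    rw [← hnorm, ← halfGaussianMoment.integral_pow_mul_affine_mul_exp_div hb]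
    refine setIntegral_congr_fun measurableSet_Ioi fun v _ => ?_
    rw [hf, hM, hb_def]
    field_simp
  have hρ := hmom 0
  have hq := hmom 1
  have hs := hmom 2
  simp only [pow_zero, one_mul, pow_one, zero_add, Nat.reduceAdd, halfGaussianMoment.zero,
    halfGaussianMoment.one hb, halfGaussianMoment.two hb, halfGaussianMoment.three hb,
    hroot] at hρ hq hs
  have hsqrt : √(2 * π) ^ 2 = 2 * π := sq_sqrt (by positivity)
  have hπ : π - 2 ≠ 0 := by linarith [pi_gt_three]
  rw [hρp, hqp, hρ, hq, hs, hb_def]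
  refine ⟨by field_simp, by field_simp; ring, ?_⟩
  field_simp
  linear_combination (-4 * a * β) * hsqrt
end

section
/- Let n ≥ 1, C > 0, and C̃ ∈ ℝ. Let q¹,…,qⁿ be real numbers with ∑_{i=1}^n qⁱ = 0, and set ρⁱ = C̃ − C·qⁱ for each i (equivalently, ρⁱ + C·qⁱ = C̃ for all i). Then ∑_{i=1}^n ρⁱ·qⁱ = −C·∑_{i=1}^n (qⁱ)², so ∑_{i=1}^n ρⁱ·qⁱ ≤ 0, with strict inequality whenever some qⁱ ≠ 0. -/
/-- Coupling conditions of the form ∑ qⁱ = 0 and ρⁱ + C·qⁱ = C̃ make the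
entropy flux at the node nonpositive. -/
theorem coupling_entropy_decay (n : ℕ) (hn : 1 ≤ n) (C Ct : ℝ) (hC : 0 < C)
    (ρ q : Fin n → ℝ) (hq : ∑ i, q i = 0)
    (hρ : ∀ i, ρ i = Ct - C * q i) :
    (∑ i, ρ i * q i) = -C * ∑ i, (q i) ^ 2 ∧
    (∑ i, ρ i * q i) ≤ 0 ∧
    ((∃ i, q i ≠ 0) → (∑ i, ρ i * q i) < 0) := by
  have key : (∑ i, ρ i * q i) = -C * ∑ i, (q i) ^ 2 := by
    have : ∀ i, ρ i * q i = Ct * q i + (-C) * (q i) ^ 2 := by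
      intro i; rw [hρ i]; ring
    simp only [this, Finset.sum_add_distrib, ← Finset.mul_sum, hq]
    ring
  have hsq : 0 ≤ ∑ i, (q i) ^ 2 :=
    Finset.sum_nonneg fun i _ => sq_nonneg _
  refine ⟨key, ?_, ?_⟩
  · rw [key]; nlinarith
  · rintro ⟨i, hi⟩
    have hpos : 0 < ∑ j, (q j) ^ 2 := by
      have h1 := Finset.single_le_sum (f := fun j => (q j) ^ 2)
        (fun j _ => sq_nonneg _) (Finset.mem_univ i)
      have h2 : 0 < (q i) ^ 2 := by positivity
      linarith
    rw [key]; nlinarith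
end
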